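/- Let λ₁, λ₂ be probability measures on X with ‖λ₁ − λ₂‖_TV ≤ δ, and let g: X → [0, ∞) be measurable with 0 < ∫ g dμ < ∞. Define Iⱼ := ∫_X ∫_X g(x′) q(x, x′) μ(dx′) λⱼ(dx) for j = 1, 2. Then σ₋ ∫g dμ ≤ Iⱼ ≤ σ₊ ∫g dμ for j = 1, 2, and |log I₁ − log I₂| ≤ δ σ₊/σ₋ = δ/(1 − ρ), where ρ = 1 − σ₋/σ₊. (This is the key step in the proofs of Lemmas 2, 3 and 11: a total-variation perturbation of the filtering distribution perturbs the one-step predictive log-density by at most δ/(1 − ρ).) -/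

import Mathlib

open MeasureTheory

/-- Total variation distance between two measures:
`‖μ − ν‖_TV = sup_{A measurable} |μ(A) − ν(A)|`. -/
noncomputable def tvDist {X : Type*} [MeasurableSpace X] (μ ν : Measure X) : ℝ :=
  ⨆ A : {A : Set X // MeasurableSet A}, |(μ A.1).toReal - (ν A.1).toReal|

/-! The predictive density `F x = ∫ g(x') q(x, x') dμ(x')` takes values in `[σ₋ ∫g, σ₊ ∫g]`, hence
so do `I₁ = ∫ F dλ₁` and `I₂ = ∫ F dλ₂`. Via a Hahn decomposition of `λ₁ - λ₂`, integrals of a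
function with values in `[a, b]` against `λ₁` and `λ₂` differ by at most `(b - a) ‖λ₁ - λ₂‖_TV`,
so `|I₁ - I₂| ≤ (σ₊ - σ₋) ∫g · δ`. Since `log` is `1/c`-Lipschitz on `[c, ∞)`, taking
`c = σ₋ ∫g` gives `|log I₁ - log I₂| ≤ (σ₊ - σ₋) δ / σ₋ ≤ δ σ₊ / σ₋`. -/

section TotalVariation

variable {X : Type*} [MeasurableSpace X]

lemma tvDist_comm (ν ν' : Measure X) : tvDist ν ν' = tvDist ν' ν := by
  simp only [tvDist, abs_sub_comm]

lemma tvDist_nonneg (ν ν' : Measure X) : 0 ≤ tvDist ν ν' :=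
  Real.iSup_nonneg fun _ => abs_nonneg _

lemma abs_measureReal_sub_le_tvDist (ν ν' : Measure X) [IsFiniteMeasure ν] [IsFiniteMeasure ν']
    {A : Set X} (hA : MeasurableSet A) : |ν.real A - ν'.real A| ≤ tvDist ν ν' := by
  refine le_ciSup (f := fun A : {A : Set X // MeasurableSet A} => |ν.real A - ν'.real A|)
    ⟨max (ν.real Set.univ) (ν'.real Set.univ), ?_⟩ ⟨A, hA⟩
  rintro _ ⟨B, rfl⟩
  exact abs_sub_le_of_nonneg_of_le measureReal_nonneg
    ((measureReal_mono (Set.subset_univ _)).trans (le_max_left _ _)) measureReal_nonneg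
    ((measureReal_mono (Set.subset_univ _)).trans (le_max_right _ _))

end TotalVariation

section IntegralComparison

variable {X : Type*} [MeasurableSpace X] {ν ν' : Measure X} {f : X → ℝ}

lemma integral_sub_integral_le_of_le [IsFiniteMeasure ν'] (hle : ν ≤ ν') {b : ℝ}
    (hf : Integrable f ν') (hfb : ∀ᵐ x ∂ν', f x ≤ b) :
    ∫ x, f x ∂ν' - ∫ x, f x ∂ν ≤ b * (ν'.real Set.univ - ν.real Set.univ) := by
  have : IsFiniteMeasure ν := isFiniteMeasure_of_le ν' hle
  have hmono := integral_mono_measure hle (hfb.mono fun x hx => sub_nonneg.2 hx)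
    ((integrable_const b).sub hf)
  rw [integral_sub (integrable_const b) (hf.mono_measure hle), integral_sub (integrable_const b) hf,
    integral_const, integral_const, smul_eq_mul, smul_eq_mul] at hmono
  linarith

lemma mul_sub_le_integral_sub_integral_of_le [IsFiniteMeasure ν'] (hle : ν ≤ ν') {a : ℝ}
    (hf : Integrable f ν') (hfa : ∀ᵐ x ∂ν', a ≤ f x) :
    a * (ν'.real Set.univ - ν.real Set.univ) ≤ ∫ x, f x ∂ν' - ∫ x, f x ∂ν := by
  have := integral_sub_integral_le_of_le hle hf.neg (b := -a) (hfa.mono fun x hx => neg_le_neg hx)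
  simp only [Pi.neg_apply, integral_neg] at this
  linarith

end IntegralComparison

section TotalVariationBound

variable {X : Type*} [MeasurableSpace X] (lam₁ lam₂ : Measure X) [IsProbabilityMeasure lam₁]
  [IsProbabilityMeasure lam₂] {F : X → ℝ} {a b : ℝ}

-- On the positive set `s` of a Hahn decomposition of `lam₁ - lam₂` compare `F` with `b`,
-- on its complement with `a`; both pieces involve the same mass `lam₁ s - lam₂ s`.
lemma integral_sub_integral_le_mul_tvDist (hab : a ≤ b) (h₁ : Integrable F lam₁)
    (h₂ : Integrable F lam₂) (hFa : ∀ x, a ≤ F x) (hFb : ∀ x, F x ≤ b) :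
    ∫ x, F x ∂lam₁ - ∫ x, F x ∂lam₂ ≤ (b - a) * tvDist lam₁ lam₂ := by
  obtain ⟨s, hs, hle, hge⟩ := exists_isHahnDecomposition lam₂ lam₁
  have h_pos := integral_sub_integral_le_of_le hle h₁.restrict (ae_of_all _ hFb)
  have h_neg := mul_sub_le_integral_sub_integral_of_le hge h₂.restrict (ae_of_all _ hFa)
  have h_tv : lam₁.real s - lam₂.real s ≤ tvDist lam₁ lam₂ :=
    (le_abs_self _).trans (abs_measureReal_sub_le_tvDist lam₁ lam₂ hs)
  simp only [measureReal_restrict_apply_univ, probReal_compl_eq_one_sub hs] at h_pos h_neg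
  have h_tv' := mul_le_mul_of_nonneg_left h_tv (sub_nonneg.2 hab)
  rw [← integral_add_compl hs h₁, ← integral_add_compl hs h₂]
  linarith

lemma abs_integral_sub_integral_le_mul_tvDist (hab : a ≤ b) (h₁ : Integrable F lam₁)
    (h₂ : Integrable F lam₂) (hFa : ∀ x, a ≤ F x) (hFb : ∀ x, F x ≤ b) :
    |∫ x, F x ∂lam₁ - ∫ x, F x ∂lam₂| ≤ (b - a) * tvDist lam₁ lam₂ := by
  refine abs_sub_le_iff.2 ⟨integral_sub_integral_le_mul_tvDist lam₁ lam₂ hab h₁ h₂ hFa hFb, ?_⟩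
  rw [tvDist_comm]
  exact integral_sub_integral_le_mul_tvDist lam₂ lam₁ hab h₂ h₁ hFa hFb

end TotalVariationBound

lemma Real.abs_log_sub_log_le_abs_sub_div {x y c : ℝ} (hc : 0 < c) (hcx : c ≤ x) (hcy : c ≤ y) :
    |Real.log x - Real.log y| ≤ |x - y| / c := by
  wlog hyx : y ≤ x generalizing x y
  · rw [abs_sub_comm, abs_sub_comm x]
    exact this hcy hcx (le_of_not_ge hyx)
  have hy : 0 < y := hc.trans_le hcy
  have hlog : Real.log x - Real.log y ≤ (x - y) / y := by
    rw [← Real.log_div (hy.trans_le hyx).ne' hy.ne', sub_div, div_self hy.ne']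
    exact Real.log_le_sub_one_of_pos (div_pos (hy.trans_le hyx) hy)
  rw [abs_of_nonneg (sub_nonneg.2 (Real.log_le_log hy hyx)), abs_of_nonneg (sub_nonneg.2 hyx)]
  exact hlog.trans (div_le_div_of_nonneg_left (sub_nonneg.2 hyx) hc hcy)

section WeightedIntegral

variable {X : Type*} [MeasurableSpace X] {μ : Measure X} {g k : X → ℝ}

lemma mul_integral_le_integral_mul {m : ℝ} (hg0 : ∀ᵐ x ∂μ, 0 ≤ g x) (hg : Integrable g μ)
    (hgk : Integrable (fun x => g x * k x) μ) (hk : ∀ᵐ x ∂μ, m ≤ k x) :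
    m * ∫ x, g x ∂μ ≤ ∫ x, g x * k x ∂μ := by
  rw [← integral_const_mul]
  refine integral_mono_ae (hg.const_mul m) hgk ?_
  filter_upwards [hg0, hk] with x hgx hkx
  rw [mul_comm]
  exact mul_le_mul_of_nonneg_left hkx hgx

lemma integral_mul_le_mul_integral {M : ℝ} (hg0 : ∀ᵐ x ∂μ, 0 ≤ g x) (hg : Integrable g μ)
    (hgk : Integrable (fun x => g x * k x) μ) (hk : ∀ᵐ x ∂μ, k x ≤ M) :
    ∫ x, g x * k x ∂μ ≤ M * ∫ x, g x ∂μ := by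
  rw [← integral_const_mul]
  refine integral_mono_ae hgk (hg.const_mul M) ?_
  filter_upwards [hg0, hk] with x hgx hkx
  rw [mul_comm M]
  exact mul_le_mul_of_nonneg_left hkx hgx

lemma integral_mem_Icc [IsProbabilityMeasure μ] {F : X → ℝ} {a b : ℝ} (hF : Integrable F μ)
    (hFa : ∀ᵐ x ∂μ, a ≤ F x) (hFb : ∀ᵐ x ∂μ, F x ≤ b) : ∫ x, F x ∂μ ∈ Set.Icc a b := by
  constructor
  · simpa using integral_mono_ae (integrable_const a) hF hFa
  · simpa using integral_mono_ae hF (integrable_const b) hFb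

end WeightedIntegral

theorem predictive_log_density_perturbation
    {X : Type*} [MeasurableSpace X] (μ : Measure X) [IsProbabilityMeasure μ]
    (σm σp : ℝ) (hσm : 0 < σm) (hσ : σm ≤ σp)
    (q : X → X → ℝ) (hq : Measurable (Function.uncurry q))
    (hql : ∀ x x', σm ≤ q x x') (hqu : ∀ x x', q x x' ≤ σp)
    (lam₁ lam₂ : Measure X) [IsProbabilityMeasure lam₁] [IsProbabilityMeasure lam₂]
    (δ : ℝ) (hTV : tvDist lam₁ lam₂ ≤ δ)
    (g : X → ℝ) (hgm : Measurable g) (hg0 : ∀ x, 0 ≤ g x)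
    (hgi : Integrable g μ) (hgpos : 0 < ∫ x, g x ∂μ) :
    (σm * ∫ x, g x ∂μ ≤ ∫ x, (∫ x', g x' * q x x' ∂μ) ∂lam₁ ∧
        ∫ x, (∫ x', g x' * q x x' ∂μ) ∂lam₁ ≤ σp * ∫ x, g x ∂μ) ∧
    (σm * ∫ x, g x ∂μ ≤ ∫ x, (∫ x', g x' * q x x' ∂μ) ∂lam₂ ∧
        ∫ x, (∫ x', g x' * q x x' ∂μ) ∂lam₂ ≤ σp * ∫ x, g x ∂μ) ∧
    |Real.log (∫ x, (∫ x', g x' * q x x' ∂μ) ∂lam₁) -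
        Real.log (∫ x, (∫ x', g x' * q x x' ∂μ) ∂lam₂)| ≤ δ * σp / σm ∧
    δ * σp / σm = δ / (1 - (1 - σm / σp)) := by
  set G := ∫ x, g x ∂μ
  set F : X → ℝ := fun x => ∫ x', g x' * q x x' ∂μ
  have hG : 0 < σm * G := mul_pos hσm hgpos
  have hab : σm * G ≤ σp * G := mul_le_mul_of_nonneg_right hσ hgpos.le
  have hgq : ∀ x, Integrable (fun x' => g x' * q x x') μ := fun x =>
    hgi.mul_bdd (hq.comp measurable_prodMk_left).aestronglyMeasurable (c := σp) <|
      ae_of_all _ fun x' => abs_le.2 ⟨by linarith [hql x x'], hqu x x'⟩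
  have hFa : ∀ x, σm * G ≤ F x := fun x =>
    mul_integral_le_integral_mul (ae_of_all _ hg0) hgi (hgq x) (ae_of_all _ (hql x))
  have hFb : ∀ x, F x ≤ σp * G := fun x =>
    integral_mul_le_mul_integral (ae_of_all _ hg0) hgi (hgq x) (ae_of_all _ (hqu x))
  have hFm : StronglyMeasurable F :=
    ((hgm.comp measurable_snd).mul hq).stronglyMeasurable.integral_prod_right'
  have hF : ∀ (lam : Measure X) [IsFiniteMeasure lam], Integrable F lam := fun lam _ =>
    .of_bound hFm.aestronglyMeasurable (σp * G) <| ae_of_all _ fun x =>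
      abs_le.2 ⟨by linarith [hFa x], hFb x⟩
  have hI : ∀ (lam : Measure X) [IsProbabilityMeasure lam],
      ∫ x, F x ∂lam ∈ Set.Icc (σm * G) (σp * G) :=
    fun lam _ => integral_mem_Icc (hF lam) (ae_of_all _ hFa) (ae_of_all _ hFb)
  refine ⟨hI lam₁, hI lam₂, ?_, by rw [sub_sub_cancel, div_div_eq_mul_div]⟩
  calc _ ≤ |∫ x, F x ∂lam₁ - ∫ x, F x ∂lam₂| / (σm * G) :=
        Real.abs_log_sub_log_le_abs_sub_div hG (hI lam₁).1 (hI lam₂).1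
    _ ≤ (σp * G - σm * G) * δ / (σm * G) := by
        gcongr
        exact (abs_integral_sub_integral_le_mul_tvDist lam₁ lam₂ hab (hF _) (hF _) hFa
          hFb).trans (by gcongr)
    _ ≤ δ * σp / σm := by
        have hδ := (tvDist_nonneg lam₁ lam₂).trans hTV
        rw [div_le_div_iff₀ hG hσm]
        nlinarith [mul_nonneg (mul_nonneg hδ hσm.le) hG.le]
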